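/- Let G be a bicyclic graph (a connected simple graph on n ≥ 4 vertices with n+1 edges). Then the inverse degree ρ(G) = Σ_{v} 1/deg(v) satisfies (n−2)/2 + 2/3 ≤ ρ(G) ≤ (n−3) + 1/(n−1) + 1/3; the upper bound is attained by a graph with degree sequence (n−1, 3, 2, 2, 1^{n−4}) and the lower bound by a graph with degree sequence (3, 3, 2^{n−2}). -/

import Mathlib

/-!
All degrees are positive (connectedness) and sum to `2n + 2`.

Lower bound: `1 / d ≥ (5 - d) / 6` at every positive integer `d`, with equality at `d = 2, 3`;
summing gives `ρ ≥ (5n - (2n + 2)) / 6`.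

Upper bound: leaves contribute `1` each. If `m` vertices have degree at least `2`, every edge joins
two of them or is the unique edge at a leaf, so `n + 1 ≤ m.choose 2 + (n - m)` and `m ≥ 4`; their
degrees sum to `n + m + 2`. Convexity of `1 / x`, in the form `1/x + 1/y ≤ 1/c + 1/(x + y - c)`
for `x, y ≥ c`, says that moving degree onto one vertex only increases the sum of reciprocals.
For `m ≥ 5` this gives `(m - 1)/2 + 1/(n + 4 - m)`, already small enough. For `m = 4` it is too
weak, but integrality and `d_v ≤ n - 1` force two of the four degrees to be at least `3`, and
exchanging in pairs gives `4/3 + 1/(n - 1)`.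

The bounds are attained by a star with the extra edges `{1, 2}, {1, 3}` and by an `n`-cycle with
the chord `{0, 2}`.
-/

open Finset SimpleGraph

/-- The inverse degree of a graph on `Fin n`: the sum over all vertices of the
reciprocal of the degree. -/
noncomputable def inverseDegree {n : ℕ} (G : SimpleGraph (Fin n)) : ℝ :=
  ∑ v : Fin n, (1 : ℝ) / ((G.neighborSet v).ncard : ℝ)

/-- `d` (0-indexed) is the degree sequence of `G`: some relabelling of the
vertices realizes the degrees `d 0, …, d (n-1)`. -/
def IsDegreeSequence {n : ℕ} (G : SimpleGraph (Fin n)) (d : ℕ → ℕ) : Prop :=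
  ∃ σ : Equiv.Perm (Fin n), ∀ i : Fin n, (G.neighborSet (σ i)).ncard = d (i : ℕ)

theorem five_div_six_sub_le_one_div {d : ℕ} (hd : 1 ≤ d) : 5 / 6 - d / 6 ≤ (1 : ℝ) / d := by
  -- no integer lies strictly between `2` and `3`
  have hprod : 0 ≤ ((d : ℝ) - 2) * ((d : ℝ) - 3) := by
    rcases Nat.lt_or_ge d 3 with h | h
    · have : (d : ℝ) ≤ 2 := by exact_mod_cast Nat.lt_succ_iff.mp h
      nlinarith
    · have : (3 : ℝ) ≤ d := by exact_mod_cast h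
      nlinarith
  rw [div_sub_div_same, div_le_div_iff₀ (by norm_num) (by positivity)]
  nlinarith

theorem sum_one_div_ge {ι : Type*} (s : Finset ι) {d : ι → ℕ} (hd : ∀ i ∈ s, 1 ≤ d i) :
    (5 * #s - ∑ i ∈ s, (d i : ℝ)) / 6 ≤ ∑ i ∈ s, (1 : ℝ) / d i := by
  calc (5 * #s - ∑ i ∈ s, (d i : ℝ)) / 6 = ∑ i ∈ s, (5 / 6 - (d i : ℝ) / 6) := by
        rw [sum_sub_distrib, sum_const, nsmul_eq_mul, ← sum_div]; ring
    _ ≤ ∑ i ∈ s, (1 : ℝ) / d i :=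
        sum_le_sum fun i hi => five_div_six_sub_le_one_div (hd i hi)

theorem one_div_add_one_div_le {c x y : ℝ} (hc : 0 < c) (hx : c ≤ x) (hy : c ≤ y) :
    1 / x + 1 / y ≤ 1 / c + 1 / (x + y - c) := by
  have hx0 : 0 < x := hc.trans_le hx
  have hy0 : 0 < y := hc.trans_le hy
  have hz : 0 < x + y - c := by linarith
  rw [div_add_div _ _ hx0.ne' hy0.ne', div_add_div _ _ hc.ne' hz.ne',
    div_le_div_iff₀ (by positivity) (by positivity)]
  nlinarith [mul_nonneg (sub_nonneg.2 hx) (sub_nonneg.2 hy)]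

theorem sum_one_div_le {ι : Type*} {s : Finset ι} (hs : s.Nonempty) {c : ℝ} (hc : 0 < c)
    {x : ι → ℝ} (hx : ∀ i ∈ s, c ≤ x i) :
    ∑ i ∈ s, 1 / x i ≤ (#s - 1) / c + 1 / (∑ i ∈ s, x i - (#s - 1) * c) := by
  induction hs using Finset.Nonempty.cons_induction with
  | singleton i => simp
  | cons a s ha hs ih =>
    have hs' : ∀ i ∈ s, c ≤ x i := fun i hi => hx i (mem_cons_of_mem hi)
    have hsum : #s * c ≤ ∑ i ∈ s, x i := by
      simpa using card_nsmul_le_sum s x c hs'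
    have hrest : c ≤ ∑ i ∈ s, x i - (#s - 1) * c := by linarith
    have hpair := one_div_add_one_div_le hc (hx a (mem_cons_self a s)) hrest
    rw [sum_cons, sum_cons, card_cons]
    push_cast
    calc 1 / x a + ∑ i ∈ s, 1 / x i
        ≤ 1 / x a + ((#s - 1) / c + 1 / (∑ i ∈ s, x i - (#s - 1) * c)) := by linarith [ih hs']
      _ ≤ (#s + 1 - 1) / c + 1 / (x a + ∑ i ∈ s, x i - (#s + 1 - 1) * c) := by
        have : x a + (∑ i ∈ s, x i - (#s - 1) * c) - c
            = x a + ∑ i ∈ s, x i - (#s + 1 - 1) * c := by ring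
        rw [this] at hpair
        have : (#s + 1 - 1 : ℝ) / c = (#s - 1) / c + 1 / c := by field_simp; ring
        linarith

theorem one_div_add_one_div_add_one_div_add_one_div_le {a b c e : ℝ} (ha : 3 ≤ a) (hb : 3 ≤ b)
    (hc : 2 ≤ c) (he : 2 ≤ e) :
    1 / a + 1 / b + 1 / c + 1 / e ≤ 4 / 3 + 1 / (a + b + c + e - 7) := by
  have hac := one_div_add_one_div_le two_pos (by linarith) hc (x := a)
  have hbe := one_div_add_one_div_le two_pos (by linarith) he (x := b)
  have h := one_div_add_one_div_le three_pos (by linarith : (3 : ℝ) ≤ a + c - 2)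
    (by linarith : (3 : ℝ) ≤ b + e - 2)
  have : a + c - 2 + (b + e - 2) - 3 = a + b + c + e - 7 := by ring
  rw [this] at h
  linarith

theorem sum_one_div_le_of_card_eq_four {ι : Type*} {s : Finset ι} {d : ι → ℕ} {N : ℕ}
    (hs : #s = 4) (h2 : ∀ i ∈ s, 2 ≤ d i) (hN : ∀ i ∈ s, d i ≤ N)
    (hsum : ∑ i ∈ s, d i = N + 7) :
    ∑ i ∈ s, (1 : ℝ) / d i ≤ 4 / 3 + 1 / N := by
  classical
  set t := s.filter (3 ≤ d ·)
  -- integrality: if at most one value exceeded 2, the sum would be at most `N + 6`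
  have ht : 2 ≤ #t := by
    by_contra! ht
    obtain ⟨i, hi⟩ := card_pos.mp (hs ▸ four_pos : 0 < #s)
    have hN2 : 2 ≤ N := (h2 i hi).trans (hN i hi)
    have hbig : ∑ i ∈ t, d i ≤ #t * N :=
      sum_le_card_nsmul _ _ _ fun i hi => hN i (mem_filter.mp hi).1
    have hsmall : ∑ i ∈ s.filter (¬ 3 ≤ d ·), d i ≤ #(s.filter (¬ 3 ≤ d ·)) * 2 :=
      sum_le_card_nsmul _ _ _ fun i hi => by have := (mem_filter.mp hi).2; omega
    have hcard : #t + #(s.filter (¬ 3 ≤ d ·)) = 4 := hs ▸ card_filter_add_card_filter_not _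
    have hsum' : ∑ i ∈ t, d i + ∑ i ∈ s.filter (¬ 3 ≤ d ·), d i = N + 7 :=
      (sum_filter_add_sum_filter_not _ _ _).trans hsum
    interval_cases #t <;> omega
  obtain ⟨u, hut, hu⟩ := exists_subset_card_eq ht
  have hus : u ⊆ s := hut.trans (filter_subset _ _)
  obtain ⟨a, b, hab, rfl⟩ := card_eq_two.mp hu
  obtain ⟨c, e, hce, hsu⟩ := card_eq_two.mp (show #(s \ {a, b}) = 2 by
    rw [card_sdiff_of_subset hus, hs, hu])
  have hmem : ∀ i ∈ s \ {a, b}, i ∈ s := fun i hi => (mem_sdiff.mp hi).1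
  have h3 : ∀ i ∈ ({a, b} : Finset ι), 3 ≤ d i := fun i hi => (mem_filter.mp (hut hi)).2
  have hsplit (f : ι → ℝ) : ∑ i ∈ s, f i = f a + f b + (f c + f e) := by
    rw [← sum_sdiff hus, hsu, sum_pair hce, sum_pair hab]; ring
  have hsumR : (d a : ℝ) + d b + d c + d e - 7 = N := by
    have := congrArg (Nat.cast (R := ℝ)) hsum
    push_cast at this
    rw [hsplit] at this
    linarith
  rw [hsplit, ← hsumR, ← add_assoc]
  have hc : c ∈ s \ {a, b} := by simp [hsu]
  have he : e ∈ s \ {a, b} := by simp [hsu]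
  exact one_div_add_one_div_add_one_div_add_one_div_le
    (by exact_mod_cast h3 a (by simp)) (by exact_mod_cast h3 b (by simp))
    (by exact_mod_cast h2 c (hmem c hc)) (by exact_mod_cast h2 e (hmem e he))

theorem sum_one_div_le_of_sum_eq {ι : Type*} [Fintype ι] {d : ι → ℕ} (h1 : ∀ i, 1 ≤ d i)
    (hmax : ∀ i, d i ≤ Fintype.card ι - 1) (hsum : ∑ i, d i = 2 * Fintype.card ι + 2)
    (h4 : 4 ≤ #{i | 2 ≤ d i}) :
    ∑ i, (1 : ℝ) / d i ≤ (Fintype.card ι - 3) + 1 / (Fintype.card ι - 1) + 1 / 3 := by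
  classical
  set n := Fintype.card ι
  set B : Finset ι := {i | 2 ≤ d i}
  set m := #B
  have hleaf : ∀ i ∈ Bᶜ, d i = 1 := fun i hi => by
    have := h1 i; simp [B] at hi; omega
  have hmn : m ≤ n := card_le_univ B
  have hcompl : #Bᶜ = n - m := card_compl B
  have hinv : ∑ i, (1 : ℝ) / d i = ∑ i ∈ B, (1 : ℝ) / d i + (n - m) := by
    have : ∑ i ∈ Bᶜ, (1 : ℝ) / d i = #Bᶜ := by
      rw [sum_congr rfl fun i hi => by rw [hleaf i hi, Nat.cast_one, div_one]]; simp
    rw [← sum_add_sum_compl B, this, hcompl, Nat.cast_sub hmn]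
  have hsumB : ∑ i ∈ B, d i = n + m + 2 := by
    have := sum_add_sum_compl B d
    rw [sum_congr rfl hleaf, sum_const, hcompl, smul_eq_mul, mul_one, hsum] at this
    omega
  rw [hinv]
  rcases h4.eq_or_lt with hm | hm
  · have hB := sum_one_div_le_of_card_eq_four hm.symm (fun i hi => (mem_filter.mp hi).2)
      (fun i _ => hmax i) (by omega : ∑ i ∈ B, d i = (n - 1) + 7)
    have : ((n - 1 : ℕ) : ℝ) = n - 1 := by rw [Nat.cast_sub (by omega)]; simp
    rw [this] at hB
    rw [← hm]
    push_cast
    linarith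
  · have hB := sum_one_div_le (card_pos.mp (by omega : 0 < m)) two_pos (x := fun i => (d i : ℝ))
      (fun i hi => by exact_mod_cast (mem_filter.mp hi).2)
    have hsumBR : ∑ i ∈ B, (d i : ℝ) = n + m + 2 := by exact_mod_cast hsumB
    rw [hsumBR] at hB
    have hm5 : (5 : ℝ) ≤ m := by exact_mod_cast hm
    have hmnR : (m : ℝ) ≤ n := by exact_mod_cast hmn
    have hquarter : 1 / ((n : ℝ) + m + 2 - (m - 1) * 2) ≤ 1 / 4 :=
      one_div_le_one_div_of_le (by norm_num) (by linarith)
    have : (0 : ℝ) < 1 / (n - 1) := one_div_pos.mpr (by linarith)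
    linarith

namespace SimpleGraph

variable {V : Type*} [Fintype V] (G : SimpleGraph V) [DecidableRel G.Adj]

theorem ncard_neighborSet_eq_degree (v : V) : (G.neighborSet v).ncard = G.degree v := by
  rw [Set.ncard_eq_toFinset_card', Set.toFinset_card, card_neighborSet_eq_degree]

theorem ncard_edgeSet_eq_card_edgeFinset : G.edgeSet.ncard = #G.edgeFinset := by
  rw [← coe_edgeFinset, Set.ncard_coe_finset]

theorem card_edgeFinset_le_choose_two_add_sum_degree [DecidableEq V] (s : Finset V) :
    #G.edgeFinset ≤ (#s).choose 2 + ∑ v ∈ sᶜ, G.degree v := by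
  have hcover :
      G.edgeFinset ⊆ s.offDiag.image Sym2.mk.uncurry ∪ sᶜ.biUnion (G.incidenceFinset ·) := by
    intro e he
    induction e using Sym2.ind with
    | h u v =>
      have huv : G.Adj u v := by simpa using he
      by_cases hu : u ∈ s
      · by_cases hv : v ∈ s
        · exact mem_union_left _ (mem_image.mpr ⟨(u, v), by simp [hu, hv, huv.ne], rfl⟩)
        · exact mem_union_right _ (mem_biUnion.mpr
            ⟨v, by simpa using hv, (G.mem_incidenceFinset _ _).mpr ⟨huv, by simp⟩⟩)
      · exact mem_union_right _ (mem_biUnion.mpr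
          ⟨u, by simpa using hu, (G.mem_incidenceFinset _ _).mpr ⟨huv, by simp⟩⟩)
  calc #G.edgeFinset
      ≤ #(s.offDiag.image Sym2.mk.uncurry) + #(sᶜ.biUnion (G.incidenceFinset ·)) :=
        (card_le_card hcover).trans (card_union_le _ _)
    _ ≤ (#s).choose 2 + ∑ v ∈ sᶜ, G.degree v := by
        rw [Sym2.card_image_offDiag]
        gcongr
        exact card_biUnion_le.trans_eq (sum_congr rfl fun v _ => G.card_incidenceFinset_eq_degree v)

theorem four_le_card_two_le_degree [DecidableEq V] (hG : Fintype.card V < #G.edgeFinset) :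
    4 ≤ #{v | 2 ≤ G.degree v} := by
  set s : Finset V := {v | 2 ≤ G.degree v}
  have hleaves : ∑ v ∈ sᶜ, G.degree v ≤ #sᶜ :=
    (sum_le_card_nsmul _ _ 1 fun v hv => by simp [s] at hv; omega).trans_eq (mul_one _)
  have h := G.card_edgeFinset_le_choose_two_add_sum_degree s
  rw [card_compl] at hleaves
  have hs : #s ≤ Fintype.card V := card_le_univ s
  by_contra! h3
  interval_cases hm : #s <;> simp [Nat.choose] at h <;> omega

variable [DecidableEq V] {s t v : V} [DecidableRel (G ⊔ edge s t).Adj]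

theorem degree_sup_edge_of_ne (hs : v ≠ s) (ht : v ≠ t) :
    (G ⊔ edge s t).degree v = G.degree v := by
  rw [← card_neighborFinset_eq_degree, ← card_neighborFinset_eq_degree]
  congr 1
  ext w
  simp [edge_adj, hs, ht]

theorem degree_sup_edge_left (hst : s ≠ t) (hn : ¬G.Adj s t) :
    (G ⊔ edge s t).degree s = G.degree s + 1 := by
  rw [← card_neighborFinset_eq_degree, ← card_neighborFinset_eq_degree,
    ← card_insert_of_notMem (s := G.neighborFinset s) (a := t) (by simpa)]
  congr 1
  ext w
  simp [edge_adj, hst]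
  grind

theorem degree_sup_edge_right (hst : s ≠ t) (hn : ¬G.Adj s t) :
    (G ⊔ edge s t).degree t = G.degree t + 1 := by
  rw [← card_neighborFinset_eq_degree, ← card_neighborFinset_eq_degree,
    ← card_insert_of_notMem (s := G.neighborFinset t) (a := s) (by simpa [adj_comm])]
  congr 1
  ext w
  simp [edge_adj]
  grind

theorem degree_starGraph_sup_edge_sup_edge (k : ℕ) (v : Fin (k + 4)) :
    (starGraph 0 ⊔ edge 1 2 ⊔ edge 1 3).degree v =
      if (v : ℕ) = 0 then k + 4 - 1 else if (v : ℕ) = 1 then 3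
      else if (v : ℕ) < 4 then 2 else 1 := by
  have h12 : ¬(starGraph (0 : Fin (k + 4))).Adj 1 2 := by simp [Fin.ext_iff, Nat.mod_eq_of_lt]
  have h13 : ¬(starGraph (0 : Fin (k + 4)) ⊔ edge 1 2).Adj 1 3 := by
    simp [edge_adj, Fin.ext_iff, Nat.mod_eq_of_lt]
  rcases (by omega : (v : ℕ) = 0 ∨ (v : ℕ) = 1 ∨ (v : ℕ) = 2 ∨ (v : ℕ) = 3 ∨ 4 ≤ (v : ℕ)) with
    h | h | h | h | h
  · obtain rfl : v = 0 := Fin.ext h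
    rw [degree_sup_edge_of_ne, degree_sup_edge_of_ne, degree_starGraph_center] <;>
      simp [Fin.ext_iff, Nat.mod_eq_of_lt]
  · obtain rfl : v = 1 := Fin.ext (by simp [h, Nat.mod_eq_of_lt])
    rw [degree_sup_edge_left _ _ h13, degree_sup_edge_left _ _ h12,
      degree_starGraph_of_ne_center] <;> simp [Fin.ext_iff, Nat.mod_eq_of_lt]
  · obtain rfl : v = 2 := Fin.ext (by simp [h, Nat.mod_eq_of_lt])
    rw [degree_sup_edge_of_ne, degree_sup_edge_right _ _ h12, degree_starGraph_of_ne_center] <;>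
      simp [Fin.ext_iff, Nat.mod_eq_of_lt]
  · obtain rfl : v = 3 := Fin.ext (by simp [h, Nat.mod_eq_of_lt])
    rw [degree_sup_edge_right _ _ h13, degree_sup_edge_of_ne, degree_starGraph_of_ne_center] <;>
      simp [Fin.ext_iff, Nat.mod_eq_of_lt]
  · rw [degree_sup_edge_of_ne, degree_sup_edge_of_ne, degree_starGraph_of_ne_center]
    all_goals first
      | rintro rfl; simp [Nat.mod_eq_of_lt] at h
      | simp only [if_neg (show ¬ (v : ℕ) < 4 by omega), if_neg (show (v : ℕ) ≠ 0 by omega),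
          if_neg (show (v : ℕ) ≠ 1 by omega)]

theorem degree_cycleGraph_sup_edge (k : ℕ) (v : Fin (k + 4)) :
    (cycleGraph (k + 4) ⊔ edge 0 2).degree v =
      if (v : ℕ) = 0 ∨ (v : ℕ) = 2 then 3 else 2 := by
  have h02 : ¬(cycleGraph (k + 4)).Adj 0 2 := by
    simp [cycleGraph_adj, Fin.ext_iff, Nat.mod_eq_of_lt, Fin.val_neg']
  rcases (by omega : (v : ℕ) = 0 ∨ (v : ℕ) = 2 ∨ ((v : ℕ) ≠ 0 ∧ (v : ℕ) ≠ 2)) with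
    h | h | ⟨h0, h2⟩
  · obtain rfl : v = 0 := Fin.ext h
    rw [degree_sup_edge_left _ (by simp [Fin.ext_iff, Nat.mod_eq_of_lt]) h02,
      cycleGraph_degree_three_le]
    simp
  · obtain rfl : v = 2 := Fin.ext (by simp [h, Nat.mod_eq_of_lt])
    rw [degree_sup_edge_right _ (by simp [Fin.ext_iff, Nat.mod_eq_of_lt]) h02,
      cycleGraph_degree_three_le]
    simp [Nat.mod_eq_of_lt]
  · rw [degree_sup_edge_of_ne _ (fun e => h0 (by simp [e]))
      (fun e => h2 (by simp [e, Nat.mod_eq_of_lt])),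
      cycleGraph_degree_three_le, if_neg (by omega)]

end SimpleGraph

section InverseDegree

variable {n : ℕ} {G : SimpleGraph (Fin n)}

theorem inverseDegree_eq_sum_degree [DecidableRel G.Adj] :
    inverseDegree G = ∑ v, (1 : ℝ) / G.degree v := by
  simp only [inverseDegree, ncard_neighborSet_eq_degree]

theorem le_inverseDegree [DecidableRel G.Adj] (hG : ∀ v, 1 ≤ G.degree v) :
    (5 * n - 2 * #G.edgeFinset : ℝ) / 6 ≤ inverseDegree G := by
  have h := sum_one_div_ge univ fun v _ => hG v
  rw [← Nat.cast_sum, sum_degrees_eq_twice_card_edges] at h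
  simpa [inverseDegree_eq_sum_degree] using h

theorem inverseDegree_le [DecidableRel G.Adj] (hG : ∀ v, 1 ≤ G.degree v)
    (hE : #G.edgeFinset = n + 1) :
    inverseDegree G ≤ (n - 3) + 1 / (n - 1) + 1 / 3 := by
  have h := sum_one_div_le_of_sum_eq hG
    (fun v => by simpa using Nat.le_sub_one_of_lt (G.degree_lt_card_verts v))
    (by simp [sum_degrees_eq_twice_card_edges, hE]; ring)
    (G.four_le_card_two_le_degree (by simp [hE]))
  simpa [inverseDegree_eq_sum_degree] using h

theorem IsDegreeSequence.inverseDegree_eq {d : ℕ → ℕ} (h : IsDegreeSequence G d) :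
    inverseDegree G = ∑ i ∈ range n, (1 : ℝ) / d i := by
  obtain ⟨σ, hσ⟩ := h
  rw [inverseDegree, ← Equiv.sum_comp σ,
    ← Fin.sum_univ_eq_sum_range (fun i => (1 : ℝ) / d i)]
  simp only [hσ]

theorem IsDegreeSequence.two_mul_ncard_edgeSet {d : ℕ → ℕ} (h : IsDegreeSequence G d) :
    2 * G.edgeSet.ncard = ∑ i ∈ range n, d i := by
  classical
  obtain ⟨σ, hσ⟩ := h
  rw [ncard_edgeSet_eq_card_edgeFinset, ← sum_degrees_eq_twice_card_edges, ← Equiv.sum_comp σ,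
    ← Fin.sum_univ_eq_sum_range]
  simp only [← ncard_neighborSet_eq_degree, hσ]

end InverseDegree

theorem exists_bicyclic_inverseDegree_eq_upper {n : ℕ} (hn : 4 ≤ n) :
    ∃ H : SimpleGraph (Fin n), H.Connected ∧ H.edgeSet.ncard = n + 1 ∧
      IsDegreeSequence H
        (fun i => if i = 0 then n - 1 else if i = 1 then 3 else if i < 4 then 2 else 1) ∧
      inverseDegree H = ((n : ℝ) - 3) + 1 / ((n : ℝ) - 1) + 1 / 3 := by
  obtain ⟨k, rfl⟩ := Nat.exists_eq_add_of_le' hn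
  have hd : IsDegreeSequence (starGraph 0 ⊔ edge 1 2 ⊔ edge 1 3)
      (fun i => if i = 0 then k + 4 - 1 else if i = 1 then 3 else if i < 4 then 2 else 1) :=
    ⟨Equiv.refl _, fun i => by
      rw [Equiv.refl_apply, ncard_neighborSet_eq_degree, degree_starGraph_sup_edge_sup_edge]⟩
  have hsum : ∑ i ∈ range (k + 4),
      (if i = 0 then k + 4 - 1 else if i = 1 then 3 else if i < 4 then 2 else 1) =
        2 * (k + 4 + 1) := by
    simp [sum_range_succ', show ∀ i, ¬ i + 1 + 1 + 1 + 1 < 4 by omega]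
    omega
  have h2E := hd.two_mul_ncard_edgeSet
  refine ⟨_, (connected_starGraph 0).mono (le_sup_left.trans le_sup_left), by omega, hd, ?_⟩
  rw [hd.inverseDegree_eq]
  simp [sum_range_succ', show ∀ i, ¬ i + 1 + 1 + 1 + 1 < 4 by omega]
  ring

theorem exists_bicyclic_inverseDegree_eq_lower {n : ℕ} (hn : 4 ≤ n) :
    ∃ H : SimpleGraph (Fin n), H.Connected ∧ H.edgeSet.ncard = n + 1 ∧
      IsDegreeSequence H (fun i => if i < 2 then 3 else 2) ∧
      inverseDegree H = ((n : ℝ) - 2) / 2 + 2 / 3 := by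
  obtain ⟨k, rfl⟩ := Nat.exists_eq_add_of_le' hn
  -- the degree-`3` vertices are `0` and `2`, hence the relabelling `swap 1 2`
  have hd : IsDegreeSequence (cycleGraph (k + 4) ⊔ edge 0 2)
      (fun i => if i < 2 then 3 else 2) := by
    refine ⟨Equiv.swap 1 2, fun i => ?_⟩
    rw [ncard_neighborSet_eq_degree, degree_cycleGraph_sup_edge]
    by_cases h1 : i = 1
    · subst h1; simp [Nat.mod_eq_of_lt]
    by_cases h2 : i = 2
    · subst h2; simp [Nat.mod_eq_of_lt]
    have h1' : (i : ℕ) ≠ 1 := fun e => h1 (Fin.ext (by simp [e, Nat.mod_eq_of_lt]))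
    have h2' : (i : ℕ) ≠ 2 := fun e => h2 (Fin.ext (by simp [e, Nat.mod_eq_of_lt]))
    rw [Equiv.swap_apply_of_ne_of_ne h1 h2]
    simp only
    split_ifs <;> omega
  have hsum : ∑ i ∈ range (k + 4), (if i < 2 then 3 else 2) = 2 * (k + 4 + 1) := by
    simp [sum_range_succ']
    omega
  have h2E := hd.two_mul_ncard_edgeSet
  refine ⟨cycleGraph (k + 4) ⊔ edge 0 2, cycleGraph_connected.mono le_sup_left, by omega, hd,
    ?_⟩
  rw [hd.inverseDegree_eq]
  simp [sum_range_succ']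
  ring

/-- Bounds for the inverse degree of a bicyclic graph:
`(n-2)/2 + 2/3 ≤ ρ(G) ≤ (n-3) + 1/(n-1) + 1/3`, with the upper bound attained
by a bicyclic graph with degree sequence `(n-1, 3, 2, 2, 1^{n-4})` and the lower
bound by a bicyclic graph with degree sequence `(3, 3, 2^{n-2})`. -/
theorem bicyclic_inverse_degree_bounds (n : ℕ) (hn : 4 ≤ n)
    (G : SimpleGraph (Fin n)) (hconn : G.Connected)
    (hedges : G.edgeSet.ncard = n + 1) :
    (((n : ℝ) - 2) / 2 + 2 / 3 ≤ inverseDegree G ∧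
      inverseDegree G ≤ ((n : ℝ) - 3) + 1 / ((n : ℝ) - 1) + 1 / 3) ∧
    (∃ H : SimpleGraph (Fin n), H.Connected ∧ H.edgeSet.ncard = n + 1 ∧
      IsDegreeSequence H
        (fun i => if i = 0 then n - 1 else if i = 1 then 3 else
          if i < 4 then 2 else 1) ∧
      inverseDegree H = ((n : ℝ) - 3) + 1 / ((n : ℝ) - 1) + 1 / 3) ∧
    (∃ H : SimpleGraph (Fin n), H.Connected ∧ H.edgeSet.ncard = n + 1 ∧
      IsDegreeSequence H (fun i => if i < 2 then 3 else 2) ∧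
      inverseDegree H = ((n : ℝ) - 2) / 2 + 2 / 3) := by
  classical
  have : Nontrivial (Fin n) := Fin.nontrivial_iff_two_le.mpr (by omega)
  have hdeg : ∀ v, 1 ≤ G.degree v := fun v => hconn.preconnected.degree_pos_of_nontrivial v
  have hE : #G.edgeFinset = n + 1 := by rwa [← ncard_edgeSet_eq_card_edgeFinset]
  have hlower := le_inverseDegree hdeg
  rw [hE] at hlower
  push_cast at hlower
  exact ⟨⟨by linarith, inverseDegree_le hdeg hE⟩, exists_bicyclic_inverseDegree_eq_upper hn,
    exists_bicyclic_inverseDegree_eq_lower hn⟩
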